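/- For all v = (v₁, v₂, v₃) and w = (w₁, w₂, w₃) in ℝ³, with v̂ and ŵ their se(2) hats, the matrix identity (1 − v̂/2) · ŵ · (1 + v̂/2) = se(2)-hat of ((I₃ − (1/2) ad_v + (1/4) N_v) w) holds, where ad_v is the 3×3 matrix [[0, 0, 0], [v₃, 0, −v₁], [−v₂, v₁, 0]] and N_v is the 3×3 matrix whose first column is v₁ · v and whose second and third columns are zero; that is, the inverse right-trivialized tangent of the Cayley map on se(2) is represented in vector form by dcay⁻¹_v = I₃ − (1/2) ad_v + (1/4) N_v. -/
import Mathlib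


open Matrix

/-- The `se(2)` hat map. -/
def hatSE2 (v : Fin 3 → ℝ) : Matrix (Fin 3) (Fin 3) ℝ :=
  !![0, -v 0, v 1; v 0, 0, v 2; 0, 0, 0]

/-- The adjoint matrix `ad_v` on `se(2)` in vector form. -/
def adSE2 (v : Fin 3 → ℝ) : Matrix (Fin 3) (Fin 3) ℝ :=
  !![0, 0, 0; v 2, 0, -v 0; -v 1, v 0, 0]

/-- The matrix `N_v` whose first column is `v₁ • v` and whose other columns
vanish. -/
def NSE2 (v : Fin 3 → ℝ) : Matrix (Fin 3) (Fin 3) ℝ :=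
  !![v 0 * v 0, 0, 0; v 0 * v 1, 0, 0; v 0 * v 2, 0, 0]

/-- **Vector form of the inverse right-trivialized tangent of the Cayley map
on `se(2)`:** `(1 − v̂/2) ŵ (1 + v̂/2) = hat((I₃ − ad_v/2 + N_v/4) w)`. -/
theorem cayley_se2_dcayInv_vector_form (v w : Fin 3 → ℝ) :
    (1 - (2⁻¹ : ℝ) • hatSE2 v) * hatSE2 w * (1 + (2⁻¹ : ℝ) • hatSE2 v)
      = hatSE2 ((1 - (2⁻¹ : ℝ) • adSE2 v + (4⁻¹ : ℝ) • NSE2 v) *ᵥ w) := by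
  simp only [hatSE2, adSE2, NSE2]
  ext i j
  fin_cases i <;> fin_cases j <;>
    simp [Matrix.mul_apply, Matrix.mulVec, dotProduct, Fin.sum_univ_three,
      Matrix.one_apply, Matrix.vecHead, Matrix.vecTail] <;> ring
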